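/- Let S be a saturated Hopf C*-algebra and A a left Hopf ideal of S* with a bounded right σ(S*,S)-approximate identity. Then S* is unital and equals the σ(S*,S)-closure of A. -/

import Mathlib

/-!
The net `(f i)` converges on every slice `(g ⊗ id) δ(r)`, `g ∈ A`, to `g r`. These slices span
a dense subspace of `S` by saturation, so by Banach–Alaoglu (a bounded net with at most one
weak* cluster point converges) `f i → e` weak* for some `e ∈ S*`, and `e` is a right identity
for `A`. A right identity for a nonzero `S`-invariant subspace acts as the identity on both
slice maps, again by saturation, hence is a two-sided identity of `S*`. Finally, for any
`g ∈ S*` the elements `g ★ f i` of `A` converge weak* to `g ★ e = g`.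
-/

open Filter Topology

/-- A (saturated) Hopf C*-algebra structure on a C*-algebra `S`, encoded through the
slice maps of the comultiplication `δ : S → M(S ⊗ S)`:
`sliceR f = (id ⊗ f) ∘ δ` and `sliceL f = (f ⊗ id) ∘ δ`.  The convolution product on
the dual `S*` is `f ★ g = (f ⊗ g) ∘ δ = f ∘ sliceR g = g ∘ sliceL f`.  Saturation is
encoded via its functional form: for every nonzero `S`-invariant subspace `N` of `S*`,
the span of the slices `(id ⊗ g) δ(r)` (resp. `(g ⊗ id) δ(r)`), `g ∈ N`, `r ∈ S`, is
dense in `S`. -/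
structure HopfCStarStructure (S : Type) [NonUnitalNormedRing S] [StarRing S] [CStarRing S]
    [NormedSpace ℂ S] [IsScalarTower ℂ S S] [SMulCommClass ℂ S S] [StarModule ℂ S]
    [CompleteSpace S] where
  sliceR : (S →L[ℂ] ℂ) →ₗ[ℂ] (S →L[ℂ] S)
  sliceL : (S →L[ℂ] ℂ) →ₗ[ℂ] (S →L[ℂ] S)
  norm_sliceR : ∀ (f : S →L[ℂ] ℂ) (r : S), ‖sliceR f r‖ ≤ ‖f‖ * ‖r‖
  norm_sliceL : ∀ (f : S →L[ℂ] ℂ) (r : S), ‖sliceL f r‖ ≤ ‖f‖ * ‖r‖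
  conv_eq : ∀ (f g : S →L[ℂ] ℂ) (r : S), f (sliceR g r) = g (sliceL f r)
  sliceR_conv : ∀ f g : S →L[ℂ] ℂ,
    (sliceR f).comp (sliceR g) = sliceR (f.comp (sliceR g))
  sliceL_conv : ∀ f g : S →L[ℂ] ℂ,
    (sliceL g).comp (sliceL f) = sliceL (f.comp (sliceR g))
  slice_comm : ∀ f g : S →L[ℂ] ℂ,
    (sliceL f).comp (sliceR g) = (sliceR g).comp (sliceL f)
  saturatedR : ∀ N : Submodule ℂ (S →L[ℂ] ℂ), N ≠ ⊥ →
    (∀ f ∈ N, ∀ s : S, f.comp (ContinuousLinearMap.mul ℂ S s) ∈ N ∧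
        f.comp ((ContinuousLinearMap.mul ℂ S).flip s) ∈ N) →
    Dense (↑(Submodule.span ℂ {x : S | ∃ f ∈ N, ∃ r : S, x = sliceR f r}) : Set S)
  saturatedL : ∀ N : Submodule ℂ (S →L[ℂ] ℂ), N ≠ ⊥ →
    (∀ f ∈ N, ∀ s : S, f.comp (ContinuousLinearMap.mul ℂ S s) ∈ N ∧
        f.comp ((ContinuousLinearMap.mul ℂ S).flip s) ∈ N) →
    Dense (↑(Submodule.span ℂ {x : S | ∃ f ∈ N, ∃ r : S, x = sliceL f r}) : Set S)

/-- The convolution product `f ★ g = (f ⊗ g) ∘ δ` on the dual of a Hopf C*-algebra. -/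
noncomputable def HopfCStarStructure.conv {S : Type} [NonUnitalNormedRing S] [StarRing S] [CStarRing S]
    [NormedSpace ℂ S] [IsScalarTower ℂ S S] [SMulCommClass ℂ S S] [StarModule ℂ S]
    [CompleteSpace S] (h : HopfCStarStructure S) (f g : S →L[ℂ] ℂ) : S →L[ℂ] ℂ :=
  f.comp (h.sliceR g)

theorem MapClusterPt.eq_of_tendsto {X ι : Type*} [TopologicalSpace X] [T2Space X] {l : Filter ι}
    {u : ι → X} {x y : X} (hx : MapClusterPt x l u) (hy : Tendsto u l (𝓝 y)) : x = y :=
  eq_of_nhds_neBot (hx.clusterPt.mono hy).neBot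

theorem StrongDual.exists_tendsto_of_norm_le_of_dense_span {𝕜 E ι : Type*}
    [NontriviallyNormedField 𝕜] [ProperSpace 𝕜] [SeminormedAddCommGroup E] [NormedSpace 𝕜 E]
    {l : Filter ι} [l.NeBot] {f : ι → StrongDual 𝕜 E} {C : ℝ} (hC : ∀ i, ‖f i‖ ≤ C)
    {D : Set E} (hD : Dense (Submodule.span 𝕜 D : Set E))
    (hconv : ∀ x ∈ D, ∃ y, Tendsto (fun i ↦ f i x) l (𝓝 y)) :
    ∃ e : StrongDual 𝕜 E, ∀ x, Tendsto (fun i ↦ f i x) l (𝓝 (e x)) := by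
  set u : ι → WeakDual 𝕜 E := fun i ↦ StrongDual.toWeakDual (f i)
  set K := WeakDual.toStrongDual ⁻¹' Metric.closedBall (0 : StrongDual 𝕜 E) C
  have hK : IsCompact K := WeakDual.isCompact_closedBall 0 C
  have huK : ∀ᶠ i in l, u i ∈ K := .of_forall fun i ↦ by simpa [K, u] using hC i
  have hcluster : ∀ e : WeakDual 𝕜 E, MapClusterPt e l u →
      ∀ x ∈ D, Tendsto (fun i ↦ f i x) l (𝓝 (e x)) := by
    intro e he x hx
    obtain ⟨y, hy⟩ := hconv x hx
    rwa [(he.continuousAt_comp (WeakDual.eval_continuous x).continuousAt).eq_of_tendsto hy]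
  obtain ⟨e, -, he⟩ := hK.exists_mapClusterPt (tendsto_principal.2 huK)
  have hlim : Tendsto u l (𝓝 e) := by
    refine hK.tendsto_nhds_of_unique_mapClusterPt huK fun e' _ he' ↦ ?_
    refine ContinuousLinearMap.ext_on (f := WeakDual.toStrongDual e')
      (g := WeakDual.toStrongDual e) hD fun x hx ↦ ?_
    exact tendsto_nhds_unique (hcluster e' he' x hx) (hcluster e he x hx)
  exact ⟨WeakDual.toStrongDual e, fun x ↦ ((WeakDual.eval_continuous x).tendsto e).comp hlim⟩

/-- Invariance under both actions of `S` on `S*`, `(f ⬝ s)(x) = f (s x)` and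
`(s ⬝ f)(x) = f (x s)`. -/
def Submodule.IsSInvariant {S : Type*} [NonUnitalNormedRing S] [NormedSpace ℂ S]
    [IsScalarTower ℂ S S] [SMulCommClass ℂ S S] (A : Submodule ℂ (S →L[ℂ] ℂ)) : Prop :=
  ∀ f ∈ A, ∀ s : S, f.comp (ContinuousLinearMap.mul ℂ S s) ∈ A ∧
    f.comp ((ContinuousLinearMap.mul ℂ S).flip s) ∈ A

namespace HopfCStarStructure

open ContinuousLinearMap (id id_apply comp_id ext_on)

variable {S : Type} [NonUnitalNormedRing S] [StarRing S] [CStarRing S] [NormedSpace ℂ S]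
  [IsScalarTower ℂ S S] [SMulCommClass ℂ S S] [StarModule ℂ S] [CompleteSpace S]
  (h : HopfCStarStructure S) {A : Submodule ℂ (S →L[ℂ] ℂ)} {e : S →L[ℂ] ℂ}

theorem conv_apply (f g : S →L[ℂ] ℂ) (s : S) : h.conv f g s = g (h.sliceL f s) :=
  h.conv_eq f g s

theorem conv_eq_self_of_sliceL_eq_id (he : h.sliceL e = id ℂ S) (g : S →L[ℂ] ℂ) :
    h.conv e g = g := by
  ext s
  rw [conv_apply, he, id_apply]

theorem conv_eq_self_of_sliceR_eq_id (he : h.sliceR e = id ℂ S) (g : S →L[ℂ] ℂ) :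
    h.conv g e = g := by
  rw [conv, he, comp_id]

theorem sliceL_eq_id_of_forall_mem_conv_eq_self (hA_ne : A ≠ ⊥) (hA_inv : A.IsSInvariant)
    (he : ∀ g ∈ A, h.conv g e = g) : h.sliceL e = id ℂ S := by
  refine ext_on (h.saturatedL A hA_ne hA_inv) ?_
  rintro _ ⟨g, hg, r, rfl⟩
  have hcomp : (h.sliceL e).comp (h.sliceL g) = h.sliceL g := by
    rw [h.sliceL_conv, ← conv, he g hg]
  exact congrArg (· r) hcomp

theorem sliceR_eq_id_of_forall_mem_conv_eq_self (hA_ne : A ≠ ⊥) (hA_inv : A.IsSInvariant)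
    (he : ∀ g ∈ A, h.conv e g = g) : h.sliceR e = id ℂ S := by
  refine ext_on (h.saturatedR A hA_ne hA_inv) ?_
  rintro _ ⟨g, hg, r, rfl⟩
  have hcomp : (h.sliceR e).comp (h.sliceR g) = h.sliceR g := by
    rw [h.sliceR_conv, ← conv, he g hg]
  exact congrArg (· r) hcomp

theorem conv_eq_self_of_forall_mem_conv_eq_self (hA_ne : A ≠ ⊥) (hA_inv : A.IsSInvariant)
    (he : ∀ g ∈ A, h.conv g e = g) (g : S →L[ℂ] ℂ) :
    h.conv e g = g ∧ h.conv g e = g := by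
  have hleft := h.conv_eq_self_of_sliceL_eq_id
    (h.sliceL_eq_id_of_forall_mem_conv_eq_self hA_ne hA_inv he)
  have hright := h.conv_eq_self_of_sliceR_eq_id
    (h.sliceR_eq_id_of_forall_mem_conv_eq_self hA_ne hA_inv fun g _ ↦ hleft g)
  exact ⟨hleft g, hright g⟩

end HopfCStarStructure

/-- Let `A` be a left Hopf ideal of `S*` with a bounded right
`σ(S*,S)`-approximate identity.  Then `S*` is unital and equals the
`σ(S*,S)`-closure of `A`. -/
theorem left_hopf_ideal_right_weakstar_approx_id
    (S : Type) [NonUnitalNormedRing S] [StarRing S] [CStarRing S]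
    [NormedSpace ℂ S] [IsScalarTower ℂ S S] [SMulCommClass ℂ S S] [StarModule ℂ S]
    [CompleteSpace S] (h : HopfCStarStructure S)
    (A : Submodule ℂ (S →L[ℂ] ℂ)) (hA_ne : A ≠ ⊥)
    (hA_ideal : ∀ f : S →L[ℂ] ℂ, ∀ g ∈ A, h.conv f g ∈ A)
    (hA_inv : ∀ f ∈ A, ∀ s : S, f.comp (ContinuousLinearMap.mul ℂ S s) ∈ A ∧
        f.comp ((ContinuousLinearMap.mul ℂ S).flip s) ∈ A)
    (ι : Type) (l : Filter ι) [l.NeBot] (f : ι → (S →L[ℂ] ℂ))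
    (hmem : ∀ i, f i ∈ A) (hbdd : ∃ C : ℝ, ∀ i, ‖f i‖ ≤ C)
    (hright : ∀ g ∈ A, ∀ s : S, Tendsto (fun i => h.conv g (f i) s) l (𝓝 (g s))) :
    (∃ e : S →L[ℂ] ℂ, ∀ g : S →L[ℂ] ℂ, h.conv e g = g ∧ h.conv g e = g) ∧
    (∀ (g : S →L[ℂ] ℂ) (F : Finset S) (ε : ℝ), 0 < ε →
      ∃ g' ∈ A, ∀ s ∈ F, ‖g s - g' s‖ < ε) := by
  obtain ⟨C, hC⟩ := hbdd
  simp only [h.conv_apply] at hright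
  obtain ⟨e, he⟩ := StrongDual.exists_tendsto_of_norm_le_of_dense_span hC
    (h.saturatedL A hA_ne hA_inv) (by rintro _ ⟨g, hg, r, rfl⟩; exact ⟨g r, hright g hg r⟩)
  have he_right_on_A : ∀ g ∈ A, h.conv g e = g := fun g hg ↦
    ContinuousLinearMap.ext fun s ↦ by
      rw [h.conv_apply]; exact tendsto_nhds_unique (he _) (hright g hg s)
  have he_unit := h.conv_eq_self_of_forall_mem_conv_eq_self hA_ne hA_inv he_right_on_A
  refine ⟨⟨e, he_unit⟩, fun g F ε hε ↦ ?_⟩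
  have hconv_tendsto : ∀ s, Tendsto (fun i ↦ h.conv g (f i) s) l (𝓝 (g s)) := fun s ↦ by
    have hge : e (h.sliceL g s) = g s := by rw [← h.conv_apply, (he_unit g).2]
    simpa only [h.conv_apply, hge] using he (h.sliceL g s)
  obtain ⟨i, hi⟩ := ((eventually_all_finset F).2 fun s _ ↦
    (hconv_tendsto s).eventually (Metric.ball_mem_nhds _ hε)).exists
  refine ⟨h.conv g (f i), hA_ideal g (f i) (hmem i), fun s hs ↦ ?_⟩
  simpa only [dist_eq_norm, norm_sub_rev] using hi s hs
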